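/- Let σ be L-Lipschitz with σ(0)=0, Φ a set of n coordinate-projection patches with overlap parameter O_Φ, and let H be the class of functions x ↦ uᵀσ(Wx) where ‖u‖ ≤ b, W ∈ ℝ^{n×d} conforms to Φ and has spectral norm ‖W‖ ≤ B. Then the Rademacher complexity of H on any m points of Euclidean norm at most b_x is at most b·B·b_x·L·√(2 O_Φ / m). -/

import Mathlib

/-- Euclidean norm of a vector in `ℝ^d`. -/
noncomputable def euclNorm {d : ℕ} (x : Fin d → ℝ) : ℝ := Real.sqrt (∑ i, x i ^ 2)

/-- Spectral norm of a matrix: `sup_{‖x‖=1} ‖Mx‖`. -/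
noncomputable def specNorm {n d : ℕ} (M : Matrix (Fin n) (Fin d) ℝ) : ℝ :=
  sSup {r : ℝ | ∃ x : Fin d → ℝ, euclNorm x = 1 ∧ r = euclNorm (M.mulVec x)}

/-- Expectation over i.i.d. uniform `{-1,+1}` signs `ε : Fin m → ℝ`. -/
noncomputable def rademacherExp (m : ℕ) (f : (Fin m → ℝ) → ℝ) : ℝ :=
  (∑ ε : Fin m → Bool, f (fun i => if ε i then 1 else -1)) / 2 ^ m

/-- The matrix conforming to patches `φ` with filter `w`: row `j` embeds `w` in the
coordinates selected by `φ_j`, so that `(Wx)_j = ⟨w, φ_j(x)⟩`. -/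
noncomputable def patchMatrix {n n' d : ℕ} (φ : Fin n → Fin n' → Fin d)
    (w : Fin n' → ℝ) : Matrix (Fin n) (Fin d) ℝ :=
  fun j l => ∑ r, if φ j r = l then w r else 0

/-!
The supremum over the class is approximated by suprema over finite subclasses, and the
Rademacher average by the square root of its second moment. By Cauchy–Schwarz in the output
weights `u`, the squared supremum splits into one term per hidden unit; taking the square
inside the supremum costs a factor `2` by the symmetry `ε ↦ -ε` (the zero filter keeps both
one-sided suprema nonnegative). A contraction principle for squared suprema, proved one
coordinate at a time by pairing each sign vector with the one flipped at that coordinate,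
replaces `σ` by `L • id`. The remaining linear class is bounded by Cauchy–Schwarz, using
`‖w‖ ≤ ‖W‖` and `E (∑ εᵢ aᵢ)² = ∑ aᵢ²`; summing over the units counts every input
coordinate at most `O_Φ` times.
-/

open Finset

section EuclideanNorm

lemma euclNorm_eq_norm {d : ℕ} (x : Fin d → ℝ) : euclNorm x = ‖WithLp.toLp 2 x‖ := by
  simp [euclNorm, EuclideanSpace.norm_eq]

lemma euclNorm_nonneg {d : ℕ} (x : Fin d → ℝ) : 0 ≤ euclNorm x := Real.sqrt_nonneg _

lemma sq_euclNorm {d : ℕ} (x : Fin d → ℝ) : euclNorm x ^ 2 = ∑ i, x i ^ 2 :=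
  Real.sq_sqrt (sum_nonneg fun _ _ => sq_nonneg _)

lemma sum_sq_le_sq_of_euclNorm_le {d : ℕ} {x : Fin d → ℝ} {c : ℝ} (h : euclNorm x ≤ c) :
    ∑ i, x i ^ 2 ≤ c ^ 2 := by
  rw [← sq_euclNorm]; exact pow_le_pow_left₀ (euclNorm_nonneg x) h 2

lemma abs_le_euclNorm {d : ℕ} (x : Fin d → ℝ) (i : Fin d) : |x i| ≤ euclNorm x := by
  rw [← Real.sqrt_sq_eq_abs]
  exact Real.sqrt_le_sqrt
    (single_le_sum (f := fun i => x i ^ 2) (fun _ _ => sq_nonneg _) (mem_univ i))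

lemma bddAbove_specNorm_set {n d : ℕ} (M : Matrix (Fin n) (Fin d) ℝ) :
    BddAbove {r : ℝ | ∃ x : Fin d → ℝ, euclNorm x = 1 ∧ r = euclNorm (M.mulVec x)} := by
  let A := LinearMap.toContinuousLinearMap (Matrix.toLpLin 2 2 M)
  refine ⟨‖A‖, ?_⟩
  rintro r ⟨x, hx, rfl⟩
  have := A.le_opNorm (WithLp.toLp 2 x)
  rw [euclNorm_eq_norm] at hx ⊢
  simpa [A, hx, Matrix.toLpLin_toLp] using this

lemma specNorm_nonneg {n d : ℕ} (M : Matrix (Fin n) (Fin d) ℝ) : 0 ≤ specNorm M :=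
  Real.sSup_nonneg fun _ ⟨_, _, hr⟩ => hr ▸ euclNorm_nonneg (M.mulVec _)

lemma specNorm_zero {n d : ℕ} : specNorm (0 : Matrix (Fin n) (Fin d) ℝ) = 0 :=
  le_antisymm (Real.sSup_le (by rintro r ⟨_, _, rfl⟩; simp [euclNorm]) le_rfl) (specNorm_nonneg 0)

lemma euclNorm_smul {d : ℕ} (c : ℝ) (x : Fin d → ℝ) : euclNorm (c • x) = |c| * euclNorm x := by
  simp only [euclNorm_eq_norm, WithLp.toLp_smul, norm_smul, Real.norm_eq_abs]

lemma euclNorm_mulVec_le {n d : ℕ} (M : Matrix (Fin n) (Fin d) ℝ) (x : Fin d → ℝ) :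
    euclNorm (M.mulVec x) ≤ specNorm M * euclNorm x := by
  rcases (euclNorm_nonneg x).eq_or_lt with h | h
  · have hx : x = 0 := by
      have := h.symm
      rw [euclNorm_eq_norm, norm_eq_zero] at this
      simpa using this
    simp [hx, euclNorm]
  · have hunit : euclNorm ((euclNorm x)⁻¹ • x) = 1 := by
      rw [euclNorm_smul, abs_inv, abs_of_pos h, inv_mul_cancel₀ h.ne']
    have hle := le_csSup (bddAbove_specNorm_set M) ⟨_, hunit, rfl⟩
    rw [Matrix.mulVec_smul, euclNorm_smul, abs_inv, abs_of_pos h, inv_mul_le_iff₀ h] at hle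
    rwa [mul_comm] at hle

end EuclideanNorm

section PatchMatrix

variable {n n' d : ℕ} (φ : Fin n → Fin n' → Fin d) (w : Fin n' → ℝ)

lemma patchMatrix_mulVec_apply (y : Fin d → ℝ) (j : Fin n) :
    (patchMatrix φ w).mulVec y j = ∑ r, w r * y (φ j r) := by
  simp only [Matrix.mulVec, dotProduct, patchMatrix, sum_mul, ite_mul, zero_mul]
  rw [sum_comm]
  simp

lemma patchMatrix_apply_self {j : Fin n} (hj : Function.Injective (φ j)) (r : Fin n') :
    patchMatrix φ w j (φ j r) = w r := by
  simp [patchMatrix, hj.eq_iff]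

lemma patchMatrix_zero : patchMatrix φ 0 = 0 := by
  ext j l; simp [patchMatrix]

lemma euclNorm_le_specNorm_patchMatrix {j : Fin n} (hj : Function.Injective (φ j)) :
    euclNorm w ≤ specNorm (patchMatrix φ w) := by
  set y := patchMatrix φ w j
  have hy : ∀ r, y (φ j r) = w r := patchMatrix_apply_self φ w hj
  have hyw : euclNorm y = euclNorm w := by
    have : ∑ l, y l ^ 2 = ∑ r, w r ^ 2 := by
      have := patchMatrix_mulVec_apply φ w y j
      simp only [Matrix.mulVec, dotProduct, hy] at this
      simpa only [sq] using this
    simp only [euclNorm, this]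
  have hrow : euclNorm w ^ 2 ≤ euclNorm w * specNorm (patchMatrix φ w) := calc
    euclNorm w ^ 2 = (patchMatrix φ w).mulVec y j := by
      rw [sq_euclNorm, patchMatrix_mulVec_apply]
      simp only [hy, sq]
    _ ≤ euclNorm ((patchMatrix φ w).mulVec y) := (le_abs_self _).trans (abs_le_euclNorm _ j)
    _ ≤ euclNorm w * specNorm (patchMatrix φ w) := by
      rw [mul_comm, ← hyw]; exact euclNorm_mulVec_le _ y
  nlinarith [euclNorm_nonneg w, specNorm_nonneg (patchMatrix φ w)]

end PatchMatrix

lemma sum_sum_sq_comp_le_overlap_mul {J R D : Type*} [Fintype J] [Fintype R] [Fintype D]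
    (φ : J → R → D) (hφ : ∀ j, Function.Injective (φ j)) {O : ℕ}
    (hO : ∀ l, Nat.card {j // ∃ r, φ j r = l} ≤ O) (y : D → ℝ) :
    ∑ j, ∑ r, y (φ j r) ^ 2 ≤ O * ∑ l, y l ^ 2 := by
  classical
  have hpatch : ∀ j, ∑ r, y (φ j r) ^ 2 = ∑ l, y l ^ 2 * if ∃ r, φ j r = l then 1 else 0 := by
    intro j
    have himage : univ.image (φ j) = univ.filter (fun l => ∃ r, φ j r = l) := by ext; simp
    simp only [mul_ite, mul_one, mul_zero]
    rw [← sum_filter, ← himage, sum_image fun r _ r' _ h => hφ j h]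
  calc ∑ j, ∑ r, y (φ j r) ^ 2
      = ∑ l, y l ^ 2 * #{j | ∃ r, φ j r = l} := by
        simp only [hpatch]
        rw [sum_comm]
        simp only [← mul_sum, sum_boole]
    _ ≤ ∑ l, y l ^ 2 * O := by
        gcongr with l
        have := hO l
        rw [Nat.card_eq_fintype_card, Fintype.card_subtype] at this
        exact_mod_cast this
    _ = O * ∑ l, y l ^ 2 := by rw [mul_sum]; simp only [mul_comm]

section Signs

variable {ι : Type*}

def rsign (c : Bool) : ℝ := if c then 1 else -1

lemma rsign_not (c : Bool) : rsign (!c) = -rsign c := by cases c <;> simp [rsign]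

lemma rsign_mul_self (c : Bool) : rsign c * rsign c = 1 := by cases c <;> simp [rsign]

lemma abs_rsign (c : Bool) : |rsign c| = 1 := by cases c <;> simp [rsign]

def negSigns : Equiv.Perm (ι → Bool) :=
  Function.Involutive.toPerm (fun ε i => !ε i) fun ε => by ext; simp

@[simp] lemma negSigns_apply (ε : ι → Bool) (i : ι) : negSigns ε i = !ε i := rfl

variable [DecidableEq ι]

def flipSign (K : ι) : Equiv.Perm (ι → Bool) :=
  Function.Involutive.toPerm (fun ε => Function.update ε K (!ε K)) fun ε => by
    ext i; by_cases h : i = K <;> simp [h]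

@[simp] lemma flipSign_apply_self (K : ι) (ε : ι → Bool) : flipSign K ε K = !ε K :=
  Function.update_self K _ ε

lemma flipSign_apply_of_ne {K i : ι} (h : i ≠ K) (ε : ι → Bool) : flipSign K ε i = ε i :=
  Function.update_of_ne h _ ε

variable [Fintype ι]

lemma sum_rsign_mul_rsign (i i' : ι) :
    ∑ ε : ι → Bool, rsign (ε i) * rsign (ε i') = if i = i' then 2 ^ Fintype.card ι else 0 := by
  split_ifs with h
  · subst h
    simp [rsign_mul_self]
  · have hodd := Equiv.sum_comp (flipSign i) fun ε => rsign (ε i) * rsign (ε i')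
    simp only [flipSign_apply_self, flipSign_apply_of_ne (Ne.symm h), rsign_not, neg_mul,
      sum_neg_distrib] at hodd
    linarith

lemma sum_sq_sum_rsign_mul (a : ι → ℝ) :
    ∑ ε : ι → Bool, (∑ i, rsign (ε i) * a i) ^ 2 = 2 ^ Fintype.card ι * ∑ i, a i ^ 2 := by
  have hexpand : ∀ ε : ι → Bool, (∑ i, rsign (ε i) * a i) ^ 2
      = ∑ i, ∑ i', a i * a i' * (rsign (ε i) * rsign (ε i')) := fun ε => by
    rw [sq, sum_mul_sum]; congr! 2; ring
  simp only [hexpand]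
  rw [sum_comm]
  simp_rw [sum_comm (γ := ι → Bool) (s := univ), ← mul_sum, sum_rsign_mul_rsign, mul_ite, mul_zero,
    sum_ite_eq, mem_univ, if_true, mul_sum]
  congr! 1; ring

end Signs

lemma sum_le_sum_of_add_perm_le {β : Type*} [Fintype β] (e : Equiv.Perm β) {f g : β → ℝ}
    (h : ∀ b, f b + f (e b) ≤ g b + g (e b)) : ∑ b, f b ≤ ∑ b, g b := by
  have := sum_le_sum fun b (_ : b ∈ univ) => h b
  simp only [sum_add_distrib, Equiv.sum_comp e] at this
  linarith

lemma sq_add_sq_le_sq_add_sq {P M Q R : ℝ} (hP : 0 ≤ P) (hM : 0 ≤ M)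
    (hPQR : P ≤ max Q R) (hMQR : M ≤ max Q R) (hsum : P + M ≤ Q + R) :
    P ^ 2 + M ^ 2 ≤ Q ^ 2 + R ^ 2 := by
  rcases le_total Q R with h | h
  · rw [max_eq_right h] at hPQR hMQR
    rcases le_total P Q with hPQ | hPQ
    · nlinarith
    · nlinarith
  · rw [max_eq_left h] at hPQR hMQR
    rcases le_total M R with hMR | hMR
    · nlinarith
    · nlinarith

lemma sq_sup'_add_add_sq_sup'_sub_le {α : Type*} {W : Finset α} {w₀ : α} (hw₀ : w₀ ∈ W)
    (A g h : α → ℝ) (hA : A w₀ = 0) (hg : g w₀ = 0) (hh : h w₀ = 0)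
    (hgh : ∀ a ∈ W, ∀ b ∈ W, |g a - g b| ≤ |h a - h b|) :
    W.sup' ⟨w₀, hw₀⟩ (fun a => A a + g a) ^ 2 + W.sup' ⟨w₀, hw₀⟩ (fun a => A a - g a) ^ 2
      ≤ W.sup' ⟨w₀, hw₀⟩ (fun a => A a + h a) ^ 2 + W.sup' ⟨w₀, hw₀⟩ (fun a => A a - h a) ^ 2 := by
  have hW : W.Nonempty := ⟨w₀, hw₀⟩
  set Q := W.sup' hW fun a => A a + h a
  set R := W.sup' hW fun a => A a - h a
  have hQ : ∀ a ∈ W, A a + h a ≤ Q := fun a ha => le_sup' (fun a => A a + h a) ha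
  have hR : ∀ a ∈ W, A a - h a ≤ R := fun a ha => le_sup' (fun a => A a - h a) ha
  have habs : ∀ a ∈ W, |g a| ≤ |h a| := fun a ha => by simpa [hg, hh] using hgh a ha w₀ hw₀
  have hmax : ∀ a ∈ W, A a + |h a| ≤ max Q R := fun a ha => by
    rcases abs_cases (h a) with ⟨e, -⟩ | ⟨e, -⟩ <;> rw [e]
    · exact (hQ a ha).trans (le_max_left _ _)
    · exact (hR a ha).trans (le_max_right _ _)
  obtain ⟨a₁, ha₁, hP⟩ := exists_mem_eq_sup' hW fun a => A a + g a
  obtain ⟨a₂, ha₂, hM⟩ := exists_mem_eq_sup' hW fun a => A a - g a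
  have hP0 : 0 ≤ A a₁ + g a₁ := hP ▸ le_sup'_of_le (fun a => A a + g a) hw₀ (by simp [hA, hg])
  have hM0 : 0 ≤ A a₂ - g a₂ := hM ▸ le_sup'_of_le (fun a => A a - g a) hw₀ (by simp [hA, hg])
  rw [hP, hM]
  refine sq_add_sq_le_sq_add_sq hP0 hM0 ?_ ?_ ?_
  · linarith [le_abs_self (g a₁), habs a₁ ha₁, hmax a₁ ha₁]
  · linarith [neg_abs_le (g a₂), habs a₂ ha₂, hmax a₂ ha₂]
  · have := (le_abs_self _).trans (hgh a₁ ha₁ a₂ ha₂)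
    rcases abs_cases (h a₁ - h a₂) with ⟨e, -⟩ | ⟨e, -⟩ <;> rw [e] at this
    · linarith [hQ a₁ ha₁, hR a₂ ha₂]
    · linarith [hQ a₂ ha₂, hR a₁ ha₁]

section Contraction

variable {ι α : Type*} [Fintype ι]

def signedSup (W : Finset α) (hW : W.Nonempty) (f : α → ι → ℝ) (ε : ι → Bool) : ℝ :=
  W.sup' hW fun w => ∑ i, rsign (ε i) * f w i

variable [DecidableEq ι] {W : Finset α} {w₀ : α}

lemma sum_sq_signedSup_le_update (hw₀ : w₀ ∈ W) (t : α → ι → ℝ) (ht₀ : ∀ i, t w₀ i = 0)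
    {L : ℝ} {ψ : ι → ℝ → ℝ} (K : ι)
    (hψK : ∀ a c, |ψ K a - ψ K c| ≤ L * |a - c|) (hψ0 : ∀ i, ψ i 0 = 0) :
    ∑ ε, signedSup W ⟨w₀, hw₀⟩ (fun w i => ψ i (t w i)) ε ^ 2
      ≤ ∑ ε, signedSup W ⟨w₀, hw₀⟩
          (fun w i => Function.update ψ K (fun a => L * a) i (t w i)) ε ^ 2 := by
  refine sum_le_sum_of_add_perm_le (flipSign K) fun ε => ?_
  set A : α → ℝ := fun w => ∑ i ∈ univ.erase K, rsign (ε i) * ψ i (t w i)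
  have hsplit : ∀ (ε' : ι → Bool) (ψ' : ι → ℝ → ℝ), (∀ i ≠ K, ε' i = ε i) →
      (∀ i ≠ K, ψ' i = ψ i) → signedSup W ⟨w₀, hw₀⟩ (fun w i => ψ' i (t w i)) ε'
        = W.sup' ⟨w₀, hw₀⟩ fun w => A w + rsign (ε' K) * ψ' K (t w K) := by
    intro ε' ψ' hε' hψ'
    refine sup'_congr _ rfl fun w _ => ?_
    rw [← add_sum_erase _ _ (mem_univ K), add_comm]
    congr 1
    refine sum_congr rfl fun i hi => ?_
    simp only [hε' i (ne_of_mem_erase hi), hψ' i (ne_of_mem_erase hi)]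
  have hflip : ∀ i ≠ K, flipSign K ε i = ε i := fun i hi => flipSign_apply_of_ne hi ε
  have hupd : ∀ i ≠ K, Function.update ψ K (fun a => L * a) i = ψ i :=
    fun i hi => Function.update_of_ne hi _ _
  rw [hsplit ε ψ (fun _ _ => rfl) (fun _ _ => rfl), hsplit _ ψ hflip (fun _ _ => rfl),
    hsplit ε _ (fun _ _ => rfl) hupd, hsplit _ _ hflip hupd]
  simp only [flipSign_apply_self, rsign_not, Function.update_self, neg_mul, ← sub_eq_add_neg]
  refine sq_sup'_add_add_sq_sup'_sub_le hw₀ A _ _ ?_ ?_ ?_ fun a _ b _ => ?_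
  · simp [A, ht₀, hψ0]
  · simp [ht₀, hψ0]
  · simp [ht₀]
  · rw [← mul_sub, ← mul_sub, abs_mul, abs_mul, abs_rsign, one_mul, one_mul, ← mul_sub, abs_mul]
    exact (hψK _ _).trans (mul_le_mul_of_nonneg_right (le_abs_self L) (abs_nonneg _))

theorem sum_sq_signedSup_comp_le (hw₀ : w₀ ∈ W) (t : α → ι → ℝ) (ht₀ : ∀ i, t w₀ i = 0)
    {L : ℝ} (hL : 0 ≤ L) {ψ : ι → ℝ → ℝ}
    (hψ : ∀ i a c, |ψ i a - ψ i c| ≤ L * |a - c|) (hψ0 : ∀ i, ψ i 0 = 0) :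
    ∑ ε, signedSup W ⟨w₀, hw₀⟩ (fun w i => ψ i (t w i)) ε ^ 2
      ≤ ∑ ε, signedSup W ⟨w₀, hw₀⟩ (fun w i => L * t w i) ε ^ 2 := by
  suffices ∀ S : Finset ι, ∑ ε, signedSup W ⟨w₀, hw₀⟩ (fun w i => ψ i (t w i)) ε ^ 2
      ≤ ∑ ε, signedSup W ⟨w₀, hw₀⟩
          (fun w i => (if i ∈ S then fun a => L * a else ψ i) (t w i)) ε ^ 2 by
    simpa using this univ
  intro S
  induction S using Finset.induction_on with
  | empty => simp
  | insert K S _ ih =>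
    refine ih.trans ((sum_sq_signedSup_le_update hw₀ t ht₀ (L := L) K ?_ fun i => ?_).trans_eq ?_)
    · by_cases hK : K ∈ S <;> simp only [hK, if_true, if_false]
      · exact fun a c => by rw [← mul_sub, abs_mul, abs_of_nonneg hL]
      · exact hψ K
    · by_cases hi : i ∈ S <;> simp [hi, hψ0]
    · refine sum_congr rfl fun ε _ => ?_
      congr 2
      funext w i
      by_cases h : i = K <;> simp [h]

end Contraction

section SecondMoment

variable {ι : Type*} [Fintype ι]

lemma sq_signedSup_linear_le {R : Type*} [Fintype R] {W : Finset (R → ℝ)} (hW : W.Nonempty)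
    {B : ℝ} (hB : ∀ w ∈ W, ∑ r, w r ^ 2 ≤ B ^ 2) (L : ℝ) (z : ι → R → ℝ) (ε : ι → Bool) :
    signedSup W hW (fun w i => L * ∑ r, w r * z i r) ε ^ 2
      ≤ L ^ 2 * B ^ 2 * ∑ r, (∑ i, rsign (ε i) * z i r) ^ 2 := by
  obtain ⟨w, hw, hmax⟩ := exists_mem_eq_sup' hW fun w => ∑ i, rsign (ε i) * (L * ∑ r, w r * z i r)
  have hswap : ∑ i, rsign (ε i) * (L * ∑ r, w r * z i r)
      = L * ∑ r, w r * ∑ i, rsign (ε i) * z i r := by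
    simp only [mul_sum]; rw [sum_comm]; congr! 2; ring
  rw [signedSup, hmax, hswap, mul_pow]
  calc L ^ 2 * (∑ r, w r * ∑ i, rsign (ε i) * z i r) ^ 2
      ≤ L ^ 2 * ((∑ r, w r ^ 2) * ∑ r, (∑ i, rsign (ε i) * z i r) ^ 2) := by
        gcongr; exact sum_mul_sq_le_sq_mul_sq _ _ _
    _ ≤ L ^ 2 * B ^ 2 * ∑ r, (∑ i, rsign (ε i) * z i r) ^ 2 := by
        rw [← mul_assoc]; gcongr; exact hB w hw

variable [DecidableEq ι]

lemma sum_sup'_sq_le_two_mul_sum_sq_signedSup {α : Type*} {W : Finset α} {w₀ : α}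
    (hw₀ : w₀ ∈ W) (f : α → ι → ℝ) (hf₀ : ∀ i, f w₀ i = 0) :
    ∑ ε : ι → Bool, W.sup' ⟨w₀, hw₀⟩ (fun w => (∑ i, rsign (ε i) * f w i) ^ 2)
      ≤ 2 * ∑ ε, signedSup W ⟨w₀, hw₀⟩ f ε ^ 2 := by
  have hle : ∀ ε, ∀ w ∈ W, ∑ i, rsign (ε i) * f w i ≤ signedSup W ⟨w₀, hw₀⟩ f ε :=
    fun ε w hw => le_sup' (fun w => ∑ i, rsign (ε i) * f w i) hw
  have hnonneg : ∀ ε, 0 ≤ signedSup W ⟨w₀, hw₀⟩ f ε := fun ε => by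
    simpa [hf₀] using hle ε w₀ hw₀
  have hpt : ∀ ε, W.sup' ⟨w₀, hw₀⟩ (fun w => (∑ i, rsign (ε i) * f w i) ^ 2)
      ≤ signedSup W ⟨w₀, hw₀⟩ f ε ^ 2 + signedSup W ⟨w₀, hw₀⟩ f (negSigns ε) ^ 2 := by
    refine fun ε => sup'_le _ _ fun w hw => ?_
    have hneg := hle (negSigns ε) w hw
    simp only [negSigns_apply, rsign_not, neg_mul, sum_neg_distrib] at hneg
    have hpos := hle ε w hw
    rcases le_total 0 (∑ i, rsign (ε i) * f w i) with h | h
    · nlinarith [hnonneg (negSigns ε)]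
    · nlinarith [hnonneg ε]
  calc _ ≤ ∑ ε, (signedSup W ⟨w₀, hw₀⟩ f ε ^ 2 + signedSup W ⟨w₀, hw₀⟩ f (negSigns ε) ^ 2) :=
        sum_le_sum fun ε _ => hpt ε
    _ = 2 * ∑ ε, signedSup W ⟨w₀, hw₀⟩ f ε ^ 2 := by
        rw [sum_add_distrib, two_mul]
        congr 1
        exact Equiv.sum_comp negSigns fun ε => signedSup W _ f ε ^ 2

theorem sum_sup'_sq_neuron_le {L B : ℝ} {σ : ℝ → ℝ} (hL : 0 ≤ L)
    (hσ : ∀ a c, |σ a - σ c| ≤ L * |a - c|) (hσ0 : σ 0 = 0) {R : Type*} [Fintype R] {W : Finset (R → ℝ)} (h0 : (0 : R → ℝ) ∈ W)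
    (hB : ∀ w ∈ W, ∑ r, w r ^ 2 ≤ B ^ 2) (z : ι → R → ℝ) :
    ∑ ε : ι → Bool, W.sup' ⟨0, h0⟩ (fun w => (∑ i, rsign (ε i) * σ (∑ r, w r * z i r)) ^ 2)
      ≤ 2 ^ Fintype.card ι * (2 * L ^ 2 * B ^ 2 * ∑ i, ∑ r, z i r ^ 2) := by
  calc _ ≤ 2 * ∑ ε, signedSup W ⟨0, h0⟩ (fun w i => σ (∑ r, w r * z i r)) ε ^ 2 :=
        sum_sup'_sq_le_two_mul_sum_sq_signedSup h0 _ (by simp [hσ0])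
    _ ≤ 2 * ∑ ε, signedSup W ⟨0, h0⟩ (fun w i => L * ∑ r, w r * z i r) ε ^ 2 := by
        gcongr 2 * ?_
        exact sum_sq_signedSup_comp_le h0 (fun w i => ∑ r, w r * z i r) (by simp) hL
          (fun _ => hσ) (fun _ => hσ0)
    _ ≤ 2 * ∑ ε : ι → Bool, L ^ 2 * B ^ 2 * ∑ r, (∑ i, rsign (ε i) * z i r) ^ 2 := by
        gcongr with ε
        exact sq_signedSup_linear_le _ hB L z ε
    _ = 2 ^ Fintype.card ι * (2 * L ^ 2 * B ^ 2 * ∑ i, ∑ r, z i r ^ 2) := by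
        rw [← mul_sum, sum_comm]
        simp only [sum_sq_sum_rsign_mul fun i => z i _, ← mul_sum]
        rw [sum_comm]
        ring

end SecondMoment

theorem sum_sq_sup'_network_le {ι : Type*} [Fintype ι] [DecidableEq ι] {L B b : ℝ}
    {σ : ℝ → ℝ} (hL : 0 ≤ L) (hσ : ∀ a c, |σ a - σ c| ≤ L * |a - c|) (hσ0 : σ 0 = 0)
    {J R P : Type*} [Fintype J] [Fintype R] {F : Finset P} (hF : F.Nonempty)
    (u : P → J → ℝ) (w : P → J → R → ℝ) (hu : ∀ p ∈ F, ∑ j, u p j ^ 2 ≤ b ^ 2)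
    (hw : ∀ p ∈ F, ∀ j, ∑ r, w p j r ^ 2 ≤ B ^ 2) (z : J → ι → R → ℝ) :
    ∑ ε : ι → Bool,
        (F.sup' hF fun p => ∑ i, rsign (ε i) * ∑ j, u p j * σ (∑ r, w p j r * z j i r)) ^ 2
      ≤ 2 ^ Fintype.card ι * (2 * b ^ 2 * L ^ 2 * B ^ 2 * ∑ j, ∑ i, ∑ r, z j i r ^ 2) := by
  classical
  set W : J → Finset (R → ℝ) := fun j => insert 0 (F.image fun p => w p j)
  have h0 : ∀ j, (0 : R → ℝ) ∈ W j := fun j => mem_insert_self _ _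
  have hWB : ∀ j, ∀ v ∈ W j, ∑ r, v r ^ 2 ≤ B ^ 2 := by
    intro j v hv
    rcases mem_insert.1 hv with rfl | hv
    · simp [sq_nonneg]
    · obtain ⟨p, hp, rfl⟩ := mem_image.1 hv
      exact hw p hp j
  set V : J → (R → ℝ) → (ι → Bool) → ℝ :=
    fun j v ε => ∑ i, rsign (ε i) * σ (∑ r, v r * z j i r)
  have hpt : ∀ ε,
      (F.sup' hF fun p => ∑ i, rsign (ε i) * ∑ j, u p j * σ (∑ r, w p j r * z j i r)) ^ 2
      ≤ b ^ 2 * ∑ j, (W j).sup' ⟨0, h0 j⟩ (fun v => V j v ε ^ 2) := by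
    intro ε
    obtain ⟨p, hp, hmax⟩ := exists_mem_eq_sup' hF
      fun p => ∑ i, rsign (ε i) * ∑ j, u p j * σ (∑ r, w p j r * z j i r)
    have hswap : ∑ i, rsign (ε i) * ∑ j, u p j * σ (∑ r, w p j r * z j i r)
        = ∑ j, u p j * V j (w p j) ε := by
      simp only [V, mul_sum]; rw [sum_comm]; congr! 2; ring
    rw [hmax, hswap]
    calc (∑ j, u p j * V j (w p j) ε) ^ 2
        ≤ (∑ j, u p j ^ 2) * ∑ j, V j (w p j) ε ^ 2 := sum_mul_sq_le_sq_mul_sq _ _ _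
      _ ≤ b ^ 2 * ∑ j, (W j).sup' ⟨0, h0 j⟩ (fun v => V j v ε ^ 2) := by
        gcongr with j
        · exact hu p hp
        · have hpj : w p j ∈ W j := mem_insert_of_mem (mem_image_of_mem (fun p => w p j) hp)
          exact le_sup' (fun v => V j v ε ^ 2) hpj
  calc _ ≤ ∑ ε : ι → Bool, b ^ 2 * ∑ j, (W j).sup' ⟨0, h0 j⟩ (fun v => V j v ε ^ 2) :=
        sum_le_sum fun ε _ => hpt ε
    _ = b ^ 2 * ∑ j, ∑ ε : ι → Bool, (W j).sup' ⟨0, h0 j⟩ (fun v => V j v ε ^ 2) := by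
        rw [← mul_sum, sum_comm]
    _ ≤ b ^ 2 * ∑ j, 2 ^ Fintype.card ι * (2 * L ^ 2 * B ^ 2 * ∑ i, ∑ r, z j i r ^ 2) := by
        gcongr with j
        exact sum_sup'_sq_neuron_le hL hσ hσ0 (h0 j) (hWB j) (z j)
    _ = _ := by simp only [← mul_sum]; ring

section RademacherExp

variable {m : ℕ}

lemma rademacherExp_eq (f : (Fin m → ℝ) → ℝ) :
    rademacherExp m f = (∑ ε : Fin m → Bool, f fun i => rsign (ε i)) / 2 ^ m := rfl

lemma rademacherExp_mono {f g : (Fin m → ℝ) → ℝ}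
    (h : ∀ ε : Fin m → Bool, f (fun i => rsign (ε i)) ≤ g fun i => rsign (ε i)) :
    rademacherExp m f ≤ rademacherExp m g := by
  rw [rademacherExp_eq, rademacherExp_eq]
  gcongr with ε
  exact h ε

lemma rademacherExp_add_const (f : (Fin m → ℝ) → ℝ) (c : ℝ) :
    rademacherExp m (fun s => f s + c) = rademacherExp m f + c := by
  simp [rademacherExp_eq, sum_add_distrib, add_div]

lemma rademacherExp_const_mul (c : ℝ) (f : (Fin m → ℝ) → ℝ) :
    rademacherExp m (fun s => c * f s) = c * rademacherExp m f := by
  simp only [rademacherExp_eq, ← mul_sum, mul_div_assoc]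

lemma rademacherExp_le_sqrt (f : (Fin m → ℝ) → ℝ) :
    rademacherExp m f ≤ √(rademacherExp m fun s => f s ^ 2) := by
  have hjensen := sum_div_card_sq_le_sum_sq_div_card (s := (univ : Finset (Fin m → Bool)))
    (f := fun ε => f fun i => rsign (ε i))
  simp only [card_univ, Fintype.card_fun, Fintype.card_bool, Fintype.card_fin, Nat.cast_pow,
    Nat.cast_ofNat] at hjensen
  rw [rademacherExp_eq, rademacherExp_eq]
  exact (le_abs_self _).trans ((Real.sqrt_sq_eq_abs _).symm.trans_le (Real.sqrt_le_sqrt hjensen))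

lemma rademacherExp_iSup_le {P : Type*} [Nonempty P] (g : P → (Fin m → ℝ) → ℝ) {C : ℝ}
    (h : ∀ (F : Finset P) (hF : F.Nonempty), rademacherExp m (fun s => F.sup' hF (g · s)) ≤ C) :
    rademacherExp m (fun s => ⨆ p, g p s) ≤ C := by
  classical
  refine le_of_forall_pos_le_add fun η hη => ?_
  have hnear : ∀ ε : Fin m → Bool,
      ∃ p, (⨆ p, g p fun i => rsign (ε i)) < g p (fun i => rsign (ε i)) + η :=
    fun ε => (exists_lt_of_lt_ciSup (sub_lt_self (⨆ p, g p fun i => rsign (ε i)) hη)).imp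
      fun p hp => by linarith
  choose p hp using hnear
  have hF : (univ.image p).Nonempty := univ_nonempty.image p
  calc rademacherExp m (fun s => ⨆ p, g p s)
      ≤ rademacherExp m (fun s => (univ.image p).sup' hF (g · s) + η) :=
        rademacherExp_mono fun ε => (hp ε).le.trans
          (add_le_add_left (le_sup' (g · _) (mem_image_of_mem p (mem_univ ε))) η)
    _ ≤ C + η := by rw [rademacherExp_add_const]; exact add_le_add_left (h _ hF) η

end RademacherExp

theorem sum_sq_sup'_patchNetwork_le {n n' d m : ℕ} {L b B bx : ℝ} (hL : 0 ≤ L)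
    {σ : ℝ → ℝ} (hσ : ∀ a c : ℝ, |σ a - σ c| ≤ L * |a - c|) (hσ0 : σ 0 = 0)
    {φ : Fin n → Fin n' → Fin d} (hφ : ∀ j, Function.Injective (φ j))
    {O : ℕ} (hO : ∀ l : Fin d, Nat.card {j : Fin n // ∃ r, φ j r = l} ≤ O)
    {x : Fin m → Fin d → ℝ} (hx : ∀ i, euclNorm (x i) ≤ bx)
    {F : Finset {p : (Fin n → ℝ) × (Fin n' → ℝ) //
      euclNorm p.1 ≤ b ∧ specNorm (patchMatrix φ p.2) ≤ B}} (hF : F.Nonempty) :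
    ∑ ε : Fin m → Bool, (F.sup' hF fun p =>
        ∑ i, rsign (ε i) * ∑ j, p.1.1 j * σ (∑ r, p.1.2 r * x i (φ j r))) ^ 2
      ≤ 2 ^ m * ((b * B * bx * L) ^ 2 * (2 * O * m)) := by
  have hinputs : ∑ j, ∑ i, ∑ r, x i (φ j r) ^ 2 ≤ O * (m * bx ^ 2) := calc
    _ = ∑ i, ∑ j, ∑ r, x i (φ j r) ^ 2 := sum_comm
    _ ≤ ∑ i : Fin m, O * bx ^ 2 := by
      gcongr with i
      exact (sum_sum_sq_comp_le_overlap_mul φ hφ hO (x i)).trans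
        (by gcongr; exact sum_sq_le_sq_of_euclNorm_le (hx i))
    _ = O * (m * bx ^ 2) := by simp; ring
  calc _ ≤ 2 ^ m * (2 * b ^ 2 * L ^ 2 * B ^ 2 * ∑ j, ∑ i, ∑ r, x i (φ j r) ^ 2) := by
        simpa using sum_sq_sup'_network_le hL hσ hσ0 hF (fun p => p.1.1) (fun p _ => p.1.2)
          (fun p _ => sum_sq_le_sq_of_euclNorm_le p.2.1)
          (fun p _ j => sum_sq_le_sq_of_euclNorm_le
            ((euclNorm_le_specNorm_patchMatrix φ _ (hφ j)).trans p.2.2))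
          fun j i r => x i (φ j r)
    _ ≤ 2 ^ m * (2 * b ^ 2 * L ^ 2 * B ^ 2 * (O * (m * bx ^ 2))) := by gcongr
    _ = 2 ^ m * ((b * B * bx * L) ^ 2 * (2 * O * m)) := by ring

/-- Rademacher complexity bound for one-hidden-layer convolutional networks
`x ↦ uᵀσ(Wx)` with `‖u‖ ≤ b`, `W` conforming to `Φ`, `‖W‖ ≤ B`, `L`-Lipschitz `σ`
with `σ(0)=0`, overlap `O_Φ ≤ O`: at most `b·B·b_x·L·√(2O/m)`. -/
theorem stmt16 (n n' d m : ℕ) (hm : 0 < m) (L b B bx : ℝ)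
    (hb : 0 ≤ b) (hB : 0 ≤ B) (hL : 0 ≤ L)
    (σ : ℝ → ℝ) (hσ : ∀ a c : ℝ, |σ a - σ c| ≤ L * |a - c|) (hσ0 : σ 0 = 0)
    (φ : Fin n → Fin n' → Fin d) (hφ : ∀ j, Function.Injective (φ j))
    (O : ℕ) (hO : ∀ l : Fin d, Nat.card {j : Fin n // ∃ r, φ j r = l} ≤ O)
    (x : Fin m → Fin d → ℝ) (hx : ∀ i, euclNorm (x i) ≤ bx) :
    rademacherExp m (fun ε =>
        ⨆ p : {p : (Fin n → ℝ) × (Fin n' → ℝ) //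
                euclNorm p.1 ≤ b ∧ specNorm (patchMatrix φ p.2) ≤ B},
          (1 / (m : ℝ)) * ∑ i, ε i * ∑ j, p.1.1 j * σ (∑ r, p.1.2 r * x i (φ j r)))
      ≤ b * B * bx * L * Real.sqrt (2 * O / m) := by
  have hm' : (0 : ℝ) < m := Nat.cast_pos.2 hm
  have hbx : 0 ≤ bx := (euclNorm_nonneg _).trans (hx ⟨0, hm⟩)
  have : Nonempty {p : (Fin n → ℝ) × (Fin n' → ℝ) //
      euclNorm p.1 ≤ b ∧ specNorm (patchMatrix φ p.2) ≤ B} :=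
    ⟨0, by simpa [euclNorm] using hb, by simpa [patchMatrix_zero, specNorm_zero] using hB⟩
  refine rademacherExp_iSup_le _ fun F hF => ?_
  calc rademacherExp m (fun s => F.sup' hF fun p =>
          1 / (m : ℝ) * ∑ i, s i * ∑ j, p.1.1 j * σ (∑ r, p.1.2 r * x i (φ j r)))
      = 1 / m * rademacherExp m (fun s => F.sup' hF fun p =>
          ∑ i, s i * ∑ j, p.1.1 j * σ (∑ r, p.1.2 r * x i (φ j r))) := by
        rw [← rademacherExp_const_mul]
        simp only [mul₀_sup' (a := 1 / (m : ℝ)) (by positivity)]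
    _ ≤ 1 / m * √((b * B * bx * L) ^ 2 * (2 * O * m)) := by
        gcongr
        refine (rademacherExp_le_sqrt _).trans (Real.sqrt_le_sqrt ?_)
        rw [rademacherExp_eq, div_le_iff₀ (by positivity), mul_comm]
        exact sum_sq_sup'_patchNetwork_le hL hσ hσ0 hφ hO hx hF
    _ = b * B * bx * L * √(2 * O / m) := by
        rw [Real.sqrt_mul' _ (by positivity), Real.sqrt_sq (by positivity),
          show (2 * O * m : ℝ) = m ^ 2 * (2 * O / m) by field_simp,
          Real.sqrt_mul' _ (by positivity), Real.sqrt_sq hm'.le]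
        field_simp
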